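/- Let Λ be a σ-finite measure on 𝒫 satisfying conditions (1.4) and (1.5). Then for every b > 1, ∫_{{x ∈ 𝒫 : ⟨x,e_θ⟩ > b}} ⟨x,e_θ⟩ Λ(dx) < ∞; in other words, the measure Λ̂(dx) = ⟨x,e_θ⟩ Λ(dx) satisfies Λ̂({⟨x,e_θ⟩ > b}) < ∞ for every b > 1. -/

import Mathlib

open MeasureTheory ENNReal Filter

noncomputable section

/-- The space `𝒫` of nonincreasing sequences in `[-∞, ∞)` tending to `-∞`,
equipped (as a subtype of `ℕ → EReal`) with the σ-algebra generated by the coordinate maps. -/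
def calP : Set (ℕ → EReal) :=
  {x | Antitone x ∧ (∀ n, x n ≠ ⊤) ∧ Tendsto x atTop (nhds ⊥)}

/-- `e^{θ y}`, with the convention that it is `0` when `y = -∞`, even for `θ = 0`. -/
def eexp (θ : ℝ) (y : EReal) : ℝ≥0∞ :=
  if y = ⊥ then 0 else ENNReal.ofReal (Real.exp (θ * y.toReal))

/-- `⟨x, e_θ⟩ = Σ_{n ≥ 1} e^{θ x_n}` (the sequence is indexed from `0` in Lean). -/
def ip (θ : ℝ) (x : ℕ → EReal) : ℝ≥0∞ := ∑' n, eexp θ (x n)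

/-- Condition (1.4): `∫ (1 ∧ x₁²) Λ(dx) < ∞`, with `1 ∧ x₁² = 1` when `x₁ = -∞`. -/
def cond14 (Λ : Measure calP) : Prop :=
  ∫⁻ x : calP, (if x.1 0 = ⊥ then 1
    else 1 ⊓ ENNReal.ofReal ((x.1 0).toReal ^ 2)) ∂Λ < ∞

/-- Condition (1.5): `∫ (1_{x₁>1} e^{θ x₁} + Σ_{k≥2} e^{θ x_k}) Λ(dx) < ∞`. -/
def cond15 (θ : ℝ) (Λ : Measure calP) : Prop :=
  ∫⁻ x : calP, ((if (1 : EReal) < x.1 0 then eexp θ (x.1 0) else 0)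
    + ∑' k, eexp θ (x.1 (k + 1))) ∂Λ < ∞

/-!
Fix `b > 1` and `ε > 0` with `e^{θ ε} < b`. A point of `{⟨x, e_θ⟩ > b}` either has `x₁ > ε`,
a set of finite `Λ`-mass by (1.4) since `1 ∧ x₁² ≥ 1 ∧ ε²` there, or has
`Σ_{k ≥ 2} e^{θ x_k} > b - e^{θ ε}`, a set of finite mass by (1.5) and Markov's inequality.
So `Λ(⟨x, e_θ⟩ > b) < ∞`, and as `θ ≥ 0` gives
`⟨x, e_θ⟩ ≤ 1_{x₁ > 1} e^{θ x₁} + Σ_{k ≥ 2} e^{θ x_k} + e^θ`, the integral over that set is at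
most the integral in (1.5) plus `e^θ Λ(⟨x, e_θ⟩ > b)`.
-/

theorem MeasureTheory.measure_lt_top_of_le_on_of_lintegral_lt_top {α : Type*}
    [MeasurableSpace α] {μ : Measure α} {s : Set α} (hs : MeasurableSet s) {c : ℝ≥0∞}
    (hc : c ≠ 0) {f : α → ℝ≥0∞} (hcf : ∀ x ∈ s, c ≤ f x) (hf : ∫⁻ x, f x ∂μ < ∞) :
    μ s < ∞ := by
  have hmul : c * μ s ≤ ∫⁻ x, f x ∂μ :=
    calc c * μ s = ∫⁻ _ in s, c ∂μ := (setLIntegral_const s c).symm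
      _ ≤ ∫⁻ x in s, f x ∂μ := setLIntegral_mono' hs hcf
      _ ≤ ∫⁻ x, f x ∂μ := setLIntegral_le_lintegral s f
  exact ENNReal.lt_top_of_mul_ne_top_right (hmul.trans_lt hf).ne hc

theorem exists_pos_exp_mul_lt (θ : ℝ) {b : ℝ} (hb : 1 < b) :
    ∃ ε : ℝ, 0 < ε ∧ Real.exp (θ * ε) < b := by
  have hcont : Tendsto (fun ε : ℝ => Real.exp (θ * ε)) (nhdsWithin 0 (Set.Ioi 0)) (nhds 1) := by
    simpa using ((continuous_const.mul continuous_id).rexp.tendsto (0 : ℝ)).mono_left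
      nhdsWithin_le_nhds
  obtain ⟨ε, hεb, hε⟩ := ((hcont.eventually (gt_mem_nhds hb)).and self_mem_nhdsWithin).exists
  exact ⟨ε, hε, hεb⟩

theorem measurable_calP_apply (n : ℕ) : Measurable fun x : calP => x.1 n :=
  (measurable_pi_apply n).comp measurable_subtype_coe

theorem measurable_eexp (θ : ℝ) : Measurable (eexp θ) :=
  Measurable.ite (measurableSet_singleton ⊥) measurable_const
    (ENNReal.measurable_ofReal.comp
      (Real.measurable_exp.comp (measurable_ereal_toReal.const_mul θ)))

theorem eexp_le_of_le {θ : ℝ} (hθ : 0 ≤ θ) {y : EReal} {r : ℝ} (hy : y ≤ r) :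
    eexp θ y ≤ ENNReal.ofReal (Real.exp (θ * r)) := by
  unfold eexp
  split_ifs with hbot
  · exact zero_le
  · have hyr : y.toReal ≤ r := by
      simpa using EReal.toReal_le_toReal hy hbot (EReal.coe_ne_top r)
    gcongr

def tailSum (θ : ℝ) (x : ℕ → EReal) : ℝ≥0∞ := ∑' k, eexp θ (x (k + 1))

theorem ip_eq_eexp_add_tailSum (θ : ℝ) (x : ℕ → EReal) :
    ip θ x = eexp θ (x 0) + tailSum θ x :=
  tsum_eq_zero_add' ENNReal.summable

theorem measurable_tailSum (θ : ℝ) : Measurable fun x : calP => tailSum θ x.1 :=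
  Measurable.tsum fun k => (measurable_eexp θ).comp (measurable_calP_apply (k + 1))

theorem lintegral_tailSum_lt_top {θ : ℝ} {Λ : Measure calP} (h15 : cond15 θ Λ) :
    ∫⁻ x, tailSum θ x.1 ∂Λ < ∞ :=
  (lintegral_mono fun _ => le_add_self).trans_lt h15

theorem ip_le_cond15_integrand_add {θ : ℝ} (hθ : 0 ≤ θ) (x : ℕ → EReal) :
    ip θ x ≤ (if (1 : EReal) < x 0 then eexp θ (x 0) else 0) + tailSum θ x
      + ENNReal.ofReal (Real.exp θ) := by
  rw [ip_eq_eexp_add_tailSum, add_right_comm]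
  gcongr
  split_ifs with h
  · exact le_self_add
  · rw [zero_add]
    simpa using eexp_le_of_le hθ (r := 1) (by simpa using not_lt.1 h)

theorem measure_setOf_lt_apply_zero_lt_top {Λ : Measure calP} (h14 : cond14 Λ) {ε : ℝ}
    (hε : 0 < ε) :
    Λ {x | (ε : EReal) < x.1 0} < ∞ := by
  refine measure_lt_top_of_le_on_of_lintegral_lt_top
    (measurableSet_lt measurable_const (measurable_calP_apply 0))
    (c := 1 ⊓ ENNReal.ofReal (ε ^ 2))
    (lt_inf_iff.2 ⟨zero_lt_one, ENNReal.ofReal_pos.2 (by positivity)⟩).ne' (fun x hx => ?_) h14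
  have hbot : x.1 0 ≠ ⊥ := ne_bot_of_gt hx
  have hεx : ε ≤ (x.1 0).toReal := by
    simpa using EReal.toReal_le_toReal hx.le (EReal.coe_ne_bot ε) (x.2.2.1 0)
  rw [if_neg hbot]
  gcongr

theorem lt_tailSum_of_lt_ip {θ : ℝ} (hθ : 0 ≤ θ) {x : ℕ → EReal} {ε b : ℝ}
    (hx : x 0 ≤ ε) (hεb : Real.exp (θ * ε) ≤ b) (hb : ENNReal.ofReal b < ip θ x) :
    ENNReal.ofReal (b - Real.exp (θ * ε)) < tailSum θ x := by
  refine (ENNReal.add_lt_add_iff_left (ENNReal.ofReal_ne_top (r := Real.exp (θ * ε)))).1 ?_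
  calc ENNReal.ofReal (Real.exp (θ * ε)) + ENNReal.ofReal (b - Real.exp (θ * ε))
      = ENNReal.ofReal b := by
        rw [← ENNReal.ofReal_add (Real.exp_pos _).le (sub_nonneg.2 hεb), add_sub_cancel]
    _ < ip θ x := hb
    _ = eexp θ (x 0) + tailSum θ x := ip_eq_eexp_add_tailSum θ x
    _ ≤ ENNReal.ofReal (Real.exp (θ * ε)) + tailSum θ x := by
      gcongr
      exact eexp_le_of_le hθ hx

theorem measure_setOf_ofReal_lt_ip_lt_top {θ : ℝ} (hθ : 0 ≤ θ) {Λ : Measure calP}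
    (h14 : cond14 Λ) (h15 : cond15 θ Λ) {b : ℝ} (hb : 1 < b) :
    Λ {x | ENNReal.ofReal b < ip θ x.1} < ∞ := by
  obtain ⟨ε, hε, hεb⟩ := exists_pos_exp_mul_lt θ hb
  set δ := b - Real.exp (θ * ε)
  have h_tail : Λ {x | ENNReal.ofReal δ < tailSum θ x.1} < ∞ :=
    measure_lt_top_of_le_on_of_lintegral_lt_top
      (measurableSet_lt measurable_const (measurable_tailSum θ))
      (ENNReal.ofReal_pos.2 (sub_pos.2 hεb)).ne' (fun _ hx => hx.le)
      (lintegral_tailSum_lt_top h15)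
  have hcover : {x : calP | ENNReal.ofReal b < ip θ x.1}
      ⊆ {x | (ε : EReal) < x.1 0} ∪ {x | ENNReal.ofReal δ < tailSum θ x.1} := by
    intro x hx
    by_cases h0 : (ε : EReal) < x.1 0
    · exact Or.inl h0
    · exact Or.inr (lt_tailSum_of_lt_ip hθ (not_lt.1 h0) hεb.le hx)
  exact (measure_mono hcover).trans_lt ((measure_union_le _ _).trans_lt
    (ENNReal.add_lt_top.2 ⟨measure_setOf_lt_apply_zero_lt_top h14 hε, h_tail⟩))

theorem stmt3_general (θ : ℝ) (hθ : 0 ≤ θ) (Λ : Measure calP)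
    (h14 : cond14 Λ) (h15 : cond15 θ Λ) :
    ∀ b : ℝ, 1 < b →
      ∫⁻ x : calP in {x : calP | ENNReal.ofReal b < ip θ x.1}, ip θ x.1 ∂Λ < ∞ := by
  intro b hb
  set S := {x : calP | ENNReal.ofReal b < ip θ x.1}
  calc ∫⁻ x in S, ip θ x.1 ∂Λ
      ≤ ∫⁻ x in S, ((if (1 : EReal) < x.1 0 then eexp θ (x.1 0) else 0) + tailSum θ x.1
          + ENNReal.ofReal (Real.exp θ)) ∂Λ :=
        lintegral_mono fun x => ip_le_cond15_integrand_add hθ x.1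
    _ = ∫⁻ x in S, ((if (1 : EReal) < x.1 0 then eexp θ (x.1 0) else 0) + tailSum θ x.1) ∂Λ
          + ENNReal.ofReal (Real.exp θ) * Λ S := by
        rw [lintegral_add_right _ measurable_const, setLIntegral_const]
    _ ≤ ∫⁻ x, ((if (1 : EReal) < x.1 0 then eexp θ (x.1 0) else 0) + tailSum θ x.1) ∂Λ
          + ENNReal.ofReal (Real.exp θ) * Λ S := by
        gcongr
        exact Measure.restrict_le_self
    _ < ∞ := ENNReal.add_lt_top.2 ⟨h15, ENNReal.mul_lt_top ENNReal.ofReal_lt_top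
        (measure_setOf_ofReal_lt_ip_lt_top hθ h14 h15 hb)⟩

/-- for every `b > 1`, `∫_{⟨x,e_θ⟩ > b} ⟨x,e_θ⟩ Λ(dx) < ∞`, i.e. the measure
`Λ̂(dx) = ⟨x,e_θ⟩ Λ(dx)` satisfies `Λ̂(⟨x,e_θ⟩ > b) < ∞`. -/
theorem stmt3 (θ : ℝ) (hθ : 0 ≤ θ) (Λ : Measure calP) [SigmaFinite Λ]
    (h14 : cond14 Λ) (h15 : cond15 θ Λ) :
    ∀ b : ℝ, 1 < b →
      ∫⁻ x : calP in {x : calP | ENNReal.ofReal b < ip θ x.1}, ip θ x.1 ∂Λ < ∞ :=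
  stmt3_general θ hθ Λ h14 h15
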